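/- Divergence of the ergodicity series under the logarithmic cooling schedule: let β₀ > 0 satisfy β₀ · N · Δ < 1, set β_l := β₀ · log(1+l) for l = 0, 1, 2, …, and let Q_l := (P_{β_l})^N be the N-step random-scan Gibbs kernel at inverse temperature β_l. Then Σ_{l=0}^∞ (1 − δ(Q_l)) = ∞. -/

import Mathlib

/-!
Resampling one column at a time, the Gibbs sampler can turn any configuration into any other in
`N` moves (replace the columns of `x` by those of `y` in order), and each move has probability at
least `e^{-βΔ} / (N · #colSet)`. Hence every entry of `Q = P_β ^ N` is at least
`(e^{-βΔ} / (N · #colSet))^N`, and this Doeblin-type bound also bounds `1 - δ(Q)` from below.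
For `β_l = β₀ log (1 + l)` it equals `(N · #colSet)^{-N} · (1 + l)^{-β₀NΔ}`, which is at
least `(N · #colSet)^{-N} / (1 + l)` when `β₀NΔ ≤ 1`, so the series dominates the harmonic series.
-/

open Finset Filter

noncomputable section

/-- The configuration space: M×N 0-1 matrices (Bool-valued) whose every column sums to K. -/
def Config (M N K : ℕ) : Finset (Fin M → Fin N → Bool) :=
  Finset.univ.filter fun B =>
    ∀ j : Fin N, (Finset.univ.filter fun i : Fin M => B i j = true).card = K

/-- Σ_{j∈s} B(i,j), the number of base stations in `s` caching content `i`. -/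
def colCount {M N : ℕ} (B : Fin M → Fin N → Bool) (i : Fin M) (s : Finset (Fin N)) : ℕ :=
  (s.filter fun j => B i j = true).card

/-- The cache hit rate h(B) = Σ_s w(s) Σ_i λ_i 1{Σ_{j∈s} B(i,j) ≥ 1}. -/
def hitRate {M N : ℕ} (lam : Fin M → ℝ) (w : Finset (Fin N) → ℝ)
    (B : Fin M → Fin N → Bool) : ℝ :=
  ∑ s : Finset (Fin N), w s * ∑ i : Fin M, lam i * (if 1 ≤ colCount B i s then (1 : ℝ) else 0)

/-- Columns v ∈ {0,1}^M with Σ_i v_i = K. -/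
def colSet (M K : ℕ) : Finset (Fin M → Bool) :=
  Finset.univ.filter fun v => (Finset.univ.filter fun i : Fin M => v i = true).card = K

/-- x[j←v] : x with its j-th column replaced by v. -/
def updCol {M N : ℕ} (x : Fin M → Fin N → Bool) (j : Fin N) (v : Fin M → Bool) :
    Fin M → Fin N → Bool :=
  fun i j' => if j' = j then v i else x i j'

/-- The random-scan Gibbs sampling kernel P_β(x,y). -/
def kernel (M N K : ℕ) (lam : Fin M → ℝ) (w : Finset (Fin N) → ℝ) (β : ℝ)
    (x y : Fin M → Fin N → Bool) : ℝ :=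
  (1 / (N : ℝ)) * ∑ j : Fin N,
    if ∀ (i : Fin M) (j' : Fin N), j' ≠ j → x i j' = y i j' then
      Real.exp (β * hitRate lam w y) /
        ∑ v ∈ colSet M K, Real.exp (β * hitRate lam w (updCol x j v))
    else 0

/-- The random-scan Gibbs kernel as a matrix indexed by the configuration space. -/
def kernelM (M N K : ℕ) (lam : Fin M → ℝ) (w : Finset (Fin N) → ℝ) (β : ℝ) :
    Matrix ↥(Config M N K) ↥(Config M N K) ℝ :=
  Matrix.of fun x y => kernel M N K lam w β x.1 y.1

/-- max_{B∈𝓑} h(B). -/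
def maxHit (M N K : ℕ) (lam : Fin M → ℝ) (w : Finset (Fin N) → ℝ) : ℝ :=
  sSup (hitRate lam w '' ↑(Config M N K))

/-- min_{B∈𝓑} h(B). -/
def minHit (M N K : ℕ) (lam : Fin M → ℝ) (w : Finset (Fin N) → ℝ) : ℝ :=
  sInf (hitRate lam w '' ↑(Config M N K))

/-- Δ = max_{B∈𝓑} h(B) − min_{B∈𝓑} h(B). -/
def Delta (M N K : ℕ) (lam : Fin M → ℝ) (w : Finset (Fin N) → ℝ) : ℝ :=
  maxHit M N K lam w - minHit M N K lam w

/-- Dobrushin's ergodic coefficient δ(Q) = 1 − min_{x,x'} Σ_y min(Q(x,y), Q(x',y)). -/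
def dobrushin {S : Type*} [Fintype S] (Q : S → S → ℝ) : ℝ :=
  1 - sInf {r : ℝ | ∃ x x' : S, r = ∑ y : S, min (Q x y) (Q x' y)}

theorem Matrix.pow_le_pow_apply_of_path {n α : Type*} [Fintype n] [DecidableEq n] [Semiring α]
    [PartialOrder α] [IsOrderedRing α] {A : Matrix n n α} (hA : ∀ i j, 0 ≤ A i j) {ε : α}
    (hε : 0 ≤ ε) (z : ℕ → n) (k : ℕ) (hz : ∀ t < k, ε ≤ A (z t) (z (t + 1))) :
    ε ^ k ≤ (A ^ k) (z 0) (z k) := by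
  induction k with
  | zero => simp
  | succ k ih =>
    calc ε ^ (k + 1) = ε ^ k * ε := pow_succ ε k
      _ ≤ (A ^ k) (z 0) (z k) * A (z k) (z (k + 1)) :=
          mul_le_mul (ih fun t ht => hz t (by omega)) (hz k k.lt_succ_self) hε
            (Matrix.pow_apply_nonneg hA k _ _)
      _ ≤ ∑ u, (A ^ k) (z 0) u * A u (z (k + 1)) :=
          Finset.single_le_sum (f := fun u => (A ^ k) (z 0) u * A u (z (k + 1)))
            (fun u _ => mul_nonneg (Matrix.pow_apply_nonneg hA k _ _) (hA _ _))
            (Finset.mem_univ _)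
      _ = (A ^ (k + 1)) (z 0) (z (k + 1)) := by rw [pow_succ, Matrix.mul_apply]

theorem le_one_sub_dobrushin {S : Type*} [Fintype S] [Nonempty S] {Q : S → S → ℝ} {ε : ℝ}
    (hε : 0 ≤ ε) (hQ : ∀ x y, ε ≤ Q x y) : ε ≤ 1 - dobrushin Q := by
  obtain ⟨y₀⟩ := ‹Nonempty S›
  rw [dobrushin, sub_sub_cancel]
  refine le_csInf ⟨_, y₀, y₀, rfl⟩ ?_
  rintro r ⟨x, x', rfl⟩
  calc ε ≤ min (Q x y₀) (Q x' y₀) := le_min (hQ x y₀) (hQ x' y₀)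
    _ ≤ ∑ y, min (Q x y) (Q x' y) :=
        Finset.single_le_sum (f := fun y => min (Q x y) (Q x' y))
          (fun y _ => le_min (hε.trans (hQ x y)) (hε.trans (hQ x' y))) (Finset.mem_univ y₀)

theorem exp_neg_mul_sub_div_card_le_exp_div_sum_exp {ι : Type*} {s : Finset ι}
    (hs : s.Nonempty) {g : ι → ℝ} {a b c β : ℝ} (hβ : 0 ≤ β) (hc : a ≤ c)
    (hg : ∀ v ∈ s, g v ≤ b) :
    Real.exp (-(β * (b - a))) / #s ≤ Real.exp (β * c) / ∑ v ∈ s, Real.exp (β * g v) := by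
  have hsum : ∑ v ∈ s, Real.exp (β * g v) ≤ #s * Real.exp (β * b) := by
    simpa using Finset.sum_le_card_nsmul s _ _ fun v hv =>
      Real.exp_le_exp.2 (mul_le_mul_of_nonneg_left (hg v hv) hβ)
  have hexp : Real.exp (-(β * (b - a))) = Real.exp (β * a) / Real.exp (β * b) := by
    rw [← Real.exp_sub]
    ring_nf
  rw [hexp, div_div, mul_comm (Real.exp _)]
  exact div_le_div₀ (Real.exp_nonneg _) (Real.exp_le_exp.2 (mul_le_mul_of_nonneg_left hc hβ))
    (Finset.sum_pos (fun _ _ => Real.exp_pos _) hs) hsum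

theorem Real.inv_le_exp_neg_mul_log {x a : ℝ} (hx : 1 ≤ x) (ha : a ≤ 1) :
    x⁻¹ ≤ Real.exp (-(a * Real.log x)) := by
  rw [← Real.exp_log (zero_lt_one.trans_le hx), ← Real.exp_neg, Real.log_exp]
  gcongr
  exact mul_le_of_le_one_left (Real.log_nonneg hx) ha

theorem tendsto_sum_range_atTop_of_div_succ_le {f : ℕ → ℝ} {c : ℝ} (hc : 0 < c)
    (hf : ∀ l : ℕ, c / ((l : ℝ) + 1) ≤ f l) :
    Tendsto (fun n => ∑ l ∈ range n, f l) atTop atTop := by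
  refine tendsto_atTop_mono (fun n => Finset.sum_le_sum fun l _ => hf l) ?_
  simpa only [div_eq_mul_one_div c, ← Finset.mul_sum] using
    Real.tendsto_sum_range_one_div_nat_succ_atTop.const_mul_atTop hc

section GibbsSampler

variable {M N K : ℕ} {lam : Fin M → ℝ} {w : Finset (Fin N) → ℝ}

theorem colSet_nonempty (hKM : K < M) : (colSet M K).Nonempty :=
  ⟨fun i => decide ((i : ℕ) < K), by simp [colSet, Fin.card_filter_val_lt, hKM.le]⟩

theorem config_nonempty (hKM : K < M) : (Config M N K).Nonempty :=
  ⟨fun i _ => decide ((i : ℕ) < K), by simp [Config, Fin.card_filter_val_lt, hKM.le]⟩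

theorem minHit_le_hitRate {B : Fin M → Fin N → Bool} (hB : B ∈ Config M N K) :
    minHit M N K lam w ≤ hitRate lam w B :=
  csInf_le ((Config M N K).finite_toSet.image _).bddBelow ⟨B, hB, rfl⟩

theorem hitRate_le_maxHit {B : Fin M → Fin N → Bool} (hB : B ∈ Config M N K) :
    hitRate lam w B ≤ maxHit M N K lam w :=
  le_csSup ((Config M N K).finite_toSet.image _).bddAbove ⟨B, hB, rfl⟩

theorem kernel_nonneg (β : ℝ) (x y : Fin M → Fin N → Bool) :
    0 ≤ kernel M N K lam w β x y := by
  unfold kernel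
  exact mul_nonneg (by positivity) (Finset.sum_nonneg fun j _ => by split_ifs <;> positivity)

theorem updCol_mem_config {x : Fin M → Fin N → Bool} {j : Fin N} {v : Fin M → Bool}
    (hx : x ∈ Config M N K) (hv : v ∈ colSet M K) : updCol x j v ∈ Config M N K := by
  simp only [Config, colSet, Finset.mem_filter, Finset.mem_univ, true_and] at hx hv ⊢
  intro j'
  by_cases h : j' = j
  · simpa [updCol, h] using hv
  · simpa [updCol, h] using hx j'

theorem exp_neg_mul_Delta_div_le_kernel (hKM : K < M) {β : ℝ} (hβ : 0 ≤ β)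
    {x y : Fin M → Fin N → Bool} (hx : x ∈ Config M N K) (hy : y ∈ Config M N K) (j : Fin N)
    (hxy : ∀ (i : Fin M) (j' : Fin N), j' ≠ j → x i j' = y i j') :
    Real.exp (-(β * Delta M N K lam w)) / (N * #(colSet M K)) ≤ kernel M N K lam w β x y := by
  have hgibbs := exp_neg_mul_sub_div_card_le_exp_div_sum_exp (colSet_nonempty hKM) hβ
    (minHit_le_hitRate (lam := lam) (w := w) hy) (g := fun v => hitRate lam w (updCol x j v))
    fun v hv => hitRate_le_maxHit (updCol_mem_config hx hv)
  calc Real.exp (-(β * Delta M N K lam w)) / (N * #(colSet M K))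
      = 1 / N * (Real.exp (-(β * Delta M N K lam w)) / #(colSet M K)) := by ring
    _ ≤ kernel M N K lam w β x y := by
      rw [kernel]
      gcongr
      refine hgibbs.trans (le_trans ?_ (Finset.single_le_sum
        (fun j' _ => by split_ifs <;> positivity) (Finset.mem_univ j)))
      rw [if_pos hxy]

def interpolate (x y : Fin M → Fin N → Bool) (t : ℕ) : Fin M → Fin N → Bool :=
  fun i j => if (j : ℕ) < t then y i j else x i j

theorem interpolate_mem_config {x y : Fin M → Fin N → Bool} (hx : x ∈ Config M N K)
    (hy : y ∈ Config M N K) (t : ℕ) : interpolate x y t ∈ Config M N K := by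
  simp only [Config, Finset.mem_filter, Finset.mem_univ, true_and] at hx hy ⊢
  intro j
  by_cases h : (j : ℕ) < t
  · simpa [interpolate, h] using hy j
  · simpa [interpolate, h] using hx j

theorem interpolate_zero (x y : Fin M → Fin N → Bool) : interpolate x y 0 = x := by
  funext i j
  simp [interpolate]

theorem interpolate_of_le (x y : Fin M → Fin N → Bool) {t : ℕ} (ht : N ≤ t) :
    interpolate x y t = y := by
  funext i j
  simp [interpolate, j.isLt.trans_le ht]

theorem interpolate_succ_apply_of_ne (x y : Fin M → Fin N → Bool) {t : ℕ} (ht : t < N)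
    (i : Fin M) {j : Fin N} (hj : j ≠ ⟨t, ht⟩) :
    interpolate x y t i j = interpolate x y (t + 1) i j := by
  have : (j : ℕ) ≠ t := fun h => hj (Fin.ext h)
  simp only [interpolate, show (j : ℕ) < t + 1 ↔ (j : ℕ) < t by omega]

theorem exp_neg_mul_Delta_div_pow_le_kernelM_pow (hKM : K < M) {β : ℝ} (hβ : 0 ≤ β)
    (x y : Config M N K) :
    (Real.exp (-(β * Delta M N K lam w)) / (N * #(colSet M K))) ^ N ≤
      (kernelM M N K lam w β ^ N) x y := by
  let z : ℕ → Config M N K := fun t => ⟨interpolate x y t, interpolate_mem_config x.2 y.2 t⟩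
  have hz0 : z 0 = x := Subtype.ext (interpolate_zero x.1 y.1)
  have hzN : z N = y := Subtype.ext (interpolate_of_le x.1 y.1 le_rfl)
  rw [← hz0, ← hzN]
  refine Matrix.pow_le_pow_apply_of_path (fun a b => kernel_nonneg β a.1 b.1) (by positivity) z N
    fun t ht => exp_neg_mul_Delta_div_le_kernel hKM hβ (z t).2 (z (t + 1)).2 ⟨t, ht⟩
      fun i _ hj => interpolate_succ_apply_of_ne x.1 y.1 ht i hj

theorem exp_neg_mul_Delta_div_pow_le_one_sub_dobrushin (hKM : K < M) {β : ℝ} (hβ : 0 ≤ β) :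
    (Real.exp (-(β * Delta M N K lam w)) / (N * #(colSet M K))) ^ N ≤
      1 - dobrushin fun x y => (kernelM M N K lam w β ^ N) x y :=
  have : Nonempty (Config M N K) := (config_nonempty hKM).to_subtype
  le_one_sub_dobrushin (by positivity) (exp_neg_mul_Delta_div_pow_le_kernelM_pow hKM hβ)

end GibbsSampler

theorem cooling_schedule_ergodicity_series_diverges_general (M N K : ℕ) (hKM : K < M)
    (lam : Fin M → ℝ)
    (w : Finset (Fin N) → ℝ)
    (β₀ : ℝ) (hβ₀ : 0 < β₀) (hcool : β₀ * (N : ℝ) * Delta M N K lam w < 1) :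
    Tendsto
      (fun n : ℕ => ∑ l ∈ Finset.range n,
        (1 - dobrushin fun x y =>
          (kernelM M N K lam w (β₀ * Real.log (1 + (l : ℝ))) ^ N) x y))
      atTop atTop := by
  set c : ℝ := ((N : ℝ) * #(colSet M K))⁻¹ ^ N
  have hc : 0 < c := by
    obtain rfl | hN := N.eq_zero_or_pos
    · simp [c]
    · exact pow_pos (inv_pos.2 (mul_pos (Nat.cast_pos.2 hN)
        (Nat.cast_pos.2 (colSet_nonempty hKM).card_pos))) N
  refine tendsto_sum_range_atTop_of_div_succ_le hc fun l => ?_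
  have hl : (1 : ℝ) ≤ 1 + l := le_add_of_nonneg_right l.cast_nonneg
  have hβ : 0 ≤ β₀ * Real.log (1 + l) := mul_nonneg hβ₀.le (Real.log_nonneg hl)
  calc c / ((l : ℝ) + 1) = c * (1 + (l : ℝ))⁻¹ := by rw [add_comm, div_eq_mul_inv]
    _ ≤ c * Real.exp (-(β₀ * N * Delta M N K lam w * Real.log (1 + l))) := by
        gcongr
        exact Real.inv_le_exp_neg_mul_log hl hcool.le
    _ = (Real.exp (-(β₀ * Real.log (1 + l) * Delta M N K lam w)) / (N * #(colSet M K))) ^ N := by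
        rw [div_pow, ← Real.exp_nat_mul, div_eq_inv_mul, ← inv_pow]
        congr 2
        ring
    _ ≤ _ := exp_neg_mul_Delta_div_pow_le_one_sub_dobrushin hKM hβ

/-- under the logarithmic cooling schedule β_l = β₀ log(1+l) with
β₀ N Δ < 1, the series Σ_l (1 − δ(Q_l)) diverges, where Q_l = (P_{β_l})^N. -/
theorem cooling_schedule_ergodicity_series_diverges (M N K : ℕ) (hM : 1 ≤ M) (hN : 1 ≤ N)
    (hK : 1 ≤ K) (hKM : K < M)
    (lam : Fin M → ℝ) (hlam : ∀ i, 0 ≤ lam i)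
    (w : Finset (Fin N) → ℝ) (hw : ∀ s, 0 ≤ w s)
    (β₀ : ℝ) (hβ₀ : 0 < β₀) (hcool : β₀ * (N : ℝ) * Delta M N K lam w < 1) :
    Tendsto
      (fun n : ℕ => ∑ l ∈ Finset.range n,
        (1 - dobrushin fun x y =>
          (kernelM M N K lam w (β₀ * Real.log (1 + (l : ℝ))) ^ N) x y))
      atTop atTop :=
  cooling_schedule_ergodicity_series_diverges_general M N K hKM lam w β₀ hβ₀ hcool
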